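/- arXiv:2507.05185 — 5 statements merged into one kernel-verified Lean document; each statement's English description precedes it below -/
import Mathlib

section
/- Let A and A' be unital C*-algebras equipped with quasi-local structures over ℤ, and suppose A satisfies weak Haag duality with constant S ≥ 0. If α : A → A' is a *-isomorphism with spread at most R (i.e. α(A_I) ⊆ A'_{I^{+R}} for every finite interval I), then α⁻¹(A'_I) ⊆ A_{I^{+(R+S)}} for every finite interval I; in particular α⁻¹ also has bounded spread. -/
open Set

noncomputable section

/-- A (possibly empty) finite interval in `ℤ`. -/
def IsFinInterval (I : Set ℤ) : Prop := ∃ a b : ℤ, I = Set.Icc a b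

/-- `I^{+R}`, the `R`-fattening of a subset of `ℤ`. -/
def fatten (R : ℕ) (I : Set ℤ) : Set ℤ := {x : ℤ | ∃ y ∈ I, |x - y| ≤ (R : ℤ)}

/-- A quasi-local structure over `ℤ` on a unital C*-algebra `A`:  an assignment of a closed
unital *-subalgebra `net I` to each finite interval `I ⊆ ℤ` satisfying the axioms in the text
(the value of `net` on sets which are not finite intervals is irrelevant). -/
structure QuasiLocalStructure (A : Type*) [CStarAlgebra A] where
  net : Set ℤ → StarSubalgebra ℂ A
  isClosed_net : ∀ I : Set ℤ, IsFinInterval I → IsClosed ((net I : Set A))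
  net_empty : ∀ x ∈ net (∅ : Set ℤ), ∃ z : ℂ, x = algebraMap ℂ A z
  isotony : ∀ I J : Set ℤ, IsFinInterval I → IsFinInterval J → I ⊆ J → net I ≤ net J
  locality : ∀ I J : Set ℤ, IsFinInterval I → IsFinInterval J → I ∩ J = ∅ →
    ∀ a ∈ net I, ∀ b ∈ net J, a * b = b * a
  dense_union : Dense (⋃ I ∈ {I : Set ℤ | IsFinInterval I}, (net I : Set A))

variable {A : Type*} [CStarAlgebra A]

/-- `A_F`: the smallest closed subalgebra of `A` containing `A_I` for every finite interval
`I ⊆ F`. -/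
def QuasiLocalStructure.algebraOf (Q : QuasiLocalStructure A) (F : Set ℤ) :
    StarSubalgebra ℂ A :=
  (StarAlgebra.adjoin ℂ
    (⋃ I ∈ {I : Set ℤ | IsFinInterval I ∧ I ⊆ F}, (Q.net I : Set A))).topologicalClosure

/-- `B_F` for a subalgebra `B ⊆ A` (given by its carrier set): the smallest closed subalgebra
of `A` containing `B_I = B ∩ A_I` for every finite interval `I ⊆ F`. -/
def QuasiLocalStructure.relAlgebraOf (Q : QuasiLocalStructure A) (B : Set A) (F : Set ℤ) :
    StarSubalgebra ℂ A :=
  (StarAlgebra.adjoin ℂ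
    (⋃ I ∈ {I : Set ℤ | IsFinInterval I ∧ I ⊆ F}, (B ∩ (Q.net I : Set A)))).topologicalClosure

/-- `B` is a quasi-local subalgebra of `A`: a closed unital *-subalgebra in which the union of
the `B_I = B ∩ A_I` over all finite intervals is norm-dense. -/
structure IsQuasiLocalSubalgebra (Q : QuasiLocalStructure A) (B : StarSubalgebra ℂ A) : Prop where
  isClosed : IsClosed (B : Set A)
  dense_union : closure (⋃ I ∈ {I : Set ℤ | IsFinInterval I},
      ((B : Set A) ∩ (Q.net I : Set A))) = (B : Set A)

/-- Weak Haag duality with constant `S`: `Z_A(A_{Iᶜ}) ⊆ A_{I^{+S}}` for all finite intervals. -/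
def WeakHaagDuality (Q : QuasiLocalStructure A) (S : ℕ) : Prop :=
  ∀ I : Set ℤ, IsFinInterval I →
    Set.centralizer ((Q.algebraOf Iᶜ : Set A)) ⊆ (Q.net (fatten S I) : Set A)

/-- Weak relative Haag duality with constant `R`: `Z_A(B_{Iᶜ}) ⊆ A_{I^{+R}}`. -/
def WeakRelativeHaagDuality (Q : QuasiLocalStructure A) (B : StarSubalgebra ℂ A) (R : ℕ) :
    Prop :=
  ∀ I : Set ℤ, IsFinInterval I →
    Set.centralizer ((Q.relAlgebraOf (B : Set A) Iᶜ : Set A)) ⊆ (Q.net (fatten R I) : Set A)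

/-- A *-isomorphism `α : A → A'` has spread at most `R` if `α(A_I) ⊆ A'_{I^{+R}}` for every
finite interval `I`. -/
def HasSpread {A' : Type*} [CStarAlgebra A']
    (Q : QuasiLocalStructure A) (Q' : QuasiLocalStructure A') (α : A ≃⋆ₐ[ℂ] A') (R : ℕ) :
    Prop :=
  ∀ I : Set ℤ, IsFinInterval I → ∀ a ∈ Q.net I, α a ∈ Q'.net (fatten R I)



lemma isFinInterval_fatten (R : ℕ) {I : Set ℤ} (hI : IsFinInterval I) :
    IsFinInterval (fatten R I) := by
  obtain ⟨a, b, rfl⟩ := hI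
  by_cases hab : a ≤ b
  · refine ⟨a - R, b + R, ?_⟩
    ext x
    simp only [fatten, Set.mem_setOf_eq, Set.mem_Icc]
    constructor
    · rintro ⟨y, hy, hxy⟩
      rw [abs_le] at hxy
      omega
    · intro hx
      refine ⟨max a (min b x), by omega, ?_⟩
      rw [abs_le]; omega
  · refine ⟨1, 0, ?_⟩
    ext x
    simp only [fatten, Set.mem_setOf_eq, Set.mem_Icc]
    constructor
    · rintro ⟨y, hy, -⟩
      omega
    · omega

lemma fatten_fatten (R S : ℕ) (I : Set ℤ) :
    fatten S (fatten R I) ⊆ fatten (R + S) I := by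
  rintro x ⟨y, ⟨z, hz, hyz⟩, hxy⟩
  refine ⟨z, hz, ?_⟩
  have := abs_sub_le x y z
  push_cast
  omega

/-- If `A` satisfies weak Haag duality with constant `S ≥ 0` and
`α : A → A'` is a *-isomorphism of quasi-local algebras with spread at most `R`, then
`α⁻¹(A'_I) ⊆ A_{I^{+(R+S)}}` for every finite interval `I`; in particular `α⁻¹` also has
bounded spread. -/
theorem inverse_boundedSpread {A A' : Type*} [CStarAlgebra A] [CStarAlgebra A']
    (Q : QuasiLocalStructure A) (Q' : QuasiLocalStructure A')
    (S : ℕ) (hHaag : WeakHaagDuality Q S)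
    (α : A ≃⋆ₐ[ℂ] A') (R : ℕ) (hspread : HasSpread Q Q' α R) :
    ∀ I : Set ℤ, IsFinInterval I → ∀ a' ∈ Q'.net I,
      α.symm a' ∈ Q.net (fatten (R + S) I) := by
  intro I hI a' ha'
  set c := α.symm a' with hc
  -- Step 1: c commutes with everything in A_{(I^{+R})ᶜ}
  have hcent : c ∈ Set.centralizer ((Q.algebraOf (fatten R I)ᶜ : Set A)) := by
    intro b hb
    -- the set of elements commuting with c is a closed subalgebra
    have hgen : (⋃ J ∈ {J : Set ℤ | IsFinInterval J ∧ J ⊆ (fatten R I)ᶜ},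
        (Q.net J : Set A)) ⊆ ((Subalgebra.centralizer ℂ {c} : Subalgebra ℂ A) : Set A) := by
      rintro x hx
      simp only [Set.mem_iUnion] at hx
      obtain ⟨J, ⟨hJfin, hJsub⟩, hxJ⟩ := hx
      rw [SetLike.mem_coe, Subalgebra.mem_centralizer_iff]
      rintro m rfl
      -- show c * x = x * c, i.e. α.symm a' commutes with x ∈ A_J
      have hdisj : I ∩ fatten R J = ∅ := by
        ext z
        simp only [Set.mem_inter_iff, Set.mem_empty_iff_false, iff_false]
        rintro ⟨hzI, y, hyJ, hzy⟩
        exact hJsub hyJ ⟨z, hzI, by rw [abs_sub_comm] at hzy; exact hzy⟩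
      have hαx : α x ∈ Q'.net (fatten R J) := hspread J hJfin x hxJ
      have hcomm : a' * α x = α x * a' :=
        Q'.locality I (fatten R J) hI (isFinInterval_fatten R hJfin) hdisj a' ha' (α x) hαx
      have h2 : α.symm a' * x = x * α.symm a' := by
        have h3 := congrArg α.symm hcomm
        simpa using h3
      exact h2
    have hstar : ∀ x ∈ (⋃ J ∈ {J : Set ℤ | IsFinInterval J ∧ J ⊆ (fatten R I)ᶜ},
        (Q.net J : Set A)), star x ∈ (⋃ J ∈ {J : Set ℤ | IsFinInterval J ∧ J ⊆ (fatten R I)ᶜ},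
        (Q.net J : Set A)) := by
      intro x hx
      simp only [Set.mem_iUnion] at hx ⊢
      obtain ⟨J, hJ, hxJ⟩ := hx
      exact ⟨J, hJ, star_mem hxJ⟩
    -- adjoin is contained in the centralizer subalgebra
    have hadj : ((StarAlgebra.adjoin ℂ
        (⋃ J ∈ {J : Set ℤ | IsFinInterval J ∧ J ⊆ (fatten R I)ᶜ}, (Q.net J : Set A))) : Set A)
        ⊆ ((Subalgebra.centralizer ℂ {c} : Subalgebra ℂ A) : Set A) := by
      intro x hx
      have : x ∈ (StarAlgebra.adjoin ℂ
          (⋃ J ∈ {J : Set ℤ | IsFinInterval J ∧ J ⊆ (fatten R I)ᶜ},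
            (Q.net J : Set A))).toSubalgebra := hx
      rw [StarAlgebra.adjoin_toSubalgebra] at this
      have hle : Algebra.adjoin ℂ
          ((⋃ J ∈ {J : Set ℤ | IsFinInterval J ∧ J ⊆ (fatten R I)ᶜ}, (Q.net J : Set A)) ∪
            star (⋃ J ∈ {J : Set ℤ | IsFinInterval J ∧ J ⊆ (fatten R I)ᶜ}, (Q.net J : Set A)))
          ≤ Subalgebra.centralizer ℂ {c} := by
        rw [Algebra.adjoin_le_iff]
        rintro x (hx | hx)
        · exact hgen hx
        · rw [Set.mem_star] at hx
          have h4 := hgen (hstar _ hx)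
          rwa [star_star] at h4
      exact hle this
    -- the centralizer set is closed
    have hclosed : IsClosed ((Subalgebra.centralizer ℂ {c} : Subalgebra ℂ A) : Set A) := by
      have : ((Subalgebra.centralizer ℂ {c} : Subalgebra ℂ A) : Set A)
          = {x : A | c * x = x * c} := by
        ext x
        simp only [SetLike.mem_coe, Subalgebra.mem_centralizer_iff, Set.mem_singleton_iff,
          forall_eq, Set.mem_setOf_eq]
      rw [this]
      exact isClosed_eq (continuous_const.mul continuous_id) (continuous_id.mul continuous_const)
    have hmem : b ∈ ((Subalgebra.centralizer ℂ {c} : Subalgebra ℂ A) : Set A) := by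
      have : (Q.algebraOf (fatten R I)ᶜ : Set A) ⊆
          ((Subalgebra.centralizer ℂ {c} : Subalgebra ℂ A) : Set A) := by
        rw [QuasiLocalStructure.algebraOf, StarSubalgebra.topologicalClosure_coe]
        exact closure_minimal hadj hclosed
      exact this hb
    rw [SetLike.mem_coe, Subalgebra.mem_centralizer_iff] at hmem
    exact (hmem c rfl).symm
  -- Step 2: apply weak Haag duality to I^{+R}
  have hfatI : IsFinInterval (fatten R I) := isFinInterval_fatten R hI
  have h1 : c ∈ Q.net (fatten S (fatten R I)) := hHaag (fatten R I) hfatI hcent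
  exact Q.isotony (fatten S (fatten R I)) (fatten (R + S) I)
    (isFinInterval_fatten S hfatI) (isFinInterval_fatten (R + S) hI)
    (fatten_fatten R S I) h1


end
end

section
/- Let B be a unital C*-algebra and let A and A' be unital C*-algebras with quasi-local structures over ℤ, each containing B as a quasi-local subalgebra compatibly: there are closed unital *-subalgebras B_I ⊆ B with B_I = B ∩ A_I = B ∩ A'_I for every finite interval I, and the union of the B_I is norm-dense in B. Assume B ⊆ A' satisfies weak relative Haag duality with constant R' ≥ 0. Then every *-isomorphism α : A → A' satisfying α(b) = b for all b ∈ B has spread at most R': α(A_I) ⊆ A'_{I^{+R'}} for every finite interval I. In particular, such an α automatically has bounded spread. -/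
open Set

noncomputable section

variable {A : Type*} [CStarAlgebra A]

lemma isClosed_setCentralizer {M : Type*} [Mul M] [TopologicalSpace M] [T2Space M]
    [ContinuousMul M] (s : Set M) : IsClosed (Set.centralizer s) := by
  have h : Set.centralizer s = ⋂ g ∈ s, {z | g * z = z * g} := by
    ext z; simp [Set.mem_centralizer_iff]
  rw [h]
  exact isClosed_biInter fun g _ =>
    isClosed_eq (continuous_const.mul continuous_id) (continuous_id.mul continuous_const)

/-- Suppose `B` is a common quasi-local subalgebra of two quasi-local
algebras `A` and `A'` (via embeddings `ι, ι'` agreeing on the interval subalgebras `B_I`),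
and suppose `B ⊆ A'` satisfies weak relative Haag duality with constant `R'`.  Then every
*-isomorphism `α : A → A'` fixing `B` pointwise (`α ∘ ι = ι'`) has spread at most `R'`:
`α(A_I) ⊆ A'_{I^{+R'}}` for every finite interval `I`.  In particular such an `α`
automatically has bounded spread. -/
theorem boundedSpread_of_fixing_subalgebra {B A A' : Type*}
    [CStarAlgebra B] [CStarAlgebra A] [CStarAlgebra A']
    (Q : QuasiLocalStructure A) (Q' : QuasiLocalStructure A')
    (ι : B →⋆ₐ[ℂ] A) (ι' : B →⋆ₐ[ℂ] A')
    (hι : Function.Injective ι) (hι' : Function.Injective ι')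
    (BI : Set ℤ → StarSubalgebra ℂ B)
    (hBIclosed : ∀ I : Set ℤ, IsFinInterval I → IsClosed ((BI I : Set B)))
    (hcompat : ∀ I : Set ℤ, IsFinInterval I →
      ι '' (BI I : Set B) = Set.range ι ∩ (Q.net I : Set A))
    (hcompat' : ∀ I : Set ℤ, IsFinInterval I →
      ι' '' (BI I : Set B) = Set.range ι' ∩ (Q'.net I : Set A'))
    (hdense : Dense (⋃ I ∈ {I : Set ℤ | IsFinInterval I}, (BI I : Set B)))
    (R' : ℕ)
    (hHaag : ∀ I : Set ℤ, IsFinInterval I →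
      Set.centralizer ((Q'.relAlgebraOf (Set.range ι') Iᶜ : Set A')) ⊆
        (Q'.net (fatten R' I) : Set A'))
    (α : A ≃⋆ₐ[ℂ] A') (hfix : ∀ b : B, α (ι b) = ι' b) :
    ∀ I : Set ℤ, IsFinInterval I → ∀ a ∈ Q.net I, α a ∈ Q'.net (fatten R' I) := by
  intro I hI a ha
  set c := α a with hc
  -- every element of B_{Iᶜ} commutes with `c`
  have hle : Q'.relAlgebraOf (Set.range ι') Iᶜ ≤ StarSubalgebra.centralizer ℂ {c} := by
    apply StarSubalgebra.topologicalClosure_minimal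
    · apply StarAlgebra.adjoin_le
      rintro x hx
      simp only [Set.mem_iUnion, Set.mem_setOf_eq] at hx
      obtain ⟨J, ⟨hJ, hJI⟩, hxr, hxnet⟩ := hx
      obtain ⟨b, rfl⟩ := hxr
      have hbB : b ∈ BI J := by
        have h1 : ι' b ∈ ι' '' (BI J : Set B) := by
          rw [hcompat' J hJ]; exact ⟨⟨b, rfl⟩, hxnet⟩
        obtain ⟨b', hb', he⟩ := h1
        rwa [hι' he] at hb'
      have hιb : ι b ∈ Q.net J := by
        have h2 : ι b ∈ ι '' (BI J : Set B) := ⟨b, hbB, rfl⟩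
        rw [hcompat J hJ] at h2
        exact h2.2
      have hdisj : J ∩ I = ∅ := by
        apply Set.eq_empty_of_forall_notMem
        rintro x ⟨hxJ, hxI⟩
        exact hJI hxJ hxI
      rw [SetLike.mem_coe, StarSubalgebra.mem_centralizer_iff]
      rintro g rfl
      constructor
      · have h3 : ι b * a = a * ι b := Q.locality J I hJ hI hdisj (ι b) hιb a ha
        have : α a * α (ι b) = α (ι b) * α a := by
          rw [← map_mul, ← map_mul, h3]
        rwa [hfix b] at this
      · have hsa : star a ∈ Q.net I := star_mem ha
        have h3 : ι b * star a = star a * ι b :=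
          Q.locality J I hJ hI hdisj (ι b) hιb (star a) hsa
        have : α (star a) * α (ι b) = α (ι b) * α (star a) := by
          rw [← map_mul, ← map_mul, h3]
        rwa [hfix b, map_star] at this
    · rw [StarSubalgebra.coe_centralizer]
      exact isClosed_setCentralizer _
  have hcent : c ∈ Set.centralizer ((Q'.relAlgebraOf (Set.range ι') Iᶜ : Set A')) := by
    rw [Set.mem_centralizer_iff]
    intro m hm
    have := hle hm
    rw [StarSubalgebra.mem_centralizer_iff] at this
    exact ((this c rfl).1).symm
  exact hHaag I hI hcent

end
end

section
/- Let A be a unital C*-algebra with a quasi-local structure over ℤ and let B ⊆ A be a quasi-local subalgebra satisfying weak relative Haag duality with constant R ≥ 0. Then every linear map Ψ : A → A satisfying Ψ(b₁ a b₂) = b₁ Ψ(a) b₂ for all b₁, b₂ ∈ B and a ∈ A has spread at most R: Ψ(A_I) ⊆ A_{I^{+R}} for every finite interval I. In particular, if B ⊆ A satisfies strong relative Haag duality (R = 0), then Ψ(A_I) ⊆ A_I for every finite interval I, i.e. Ψ has spread 0. -/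
open Set

noncomputable section

variable {A : Type*} [CStarAlgebra A]

private lemma isClosed_set_centralizer {A : Type*} [CStarAlgebra A] (s : Set A) :
    IsClosed (Set.centralizer s) := by
  have : Set.centralizer s = ⋂ m ∈ s, {c : A | m * c = c * m} := by
    ext c
    simp [Set.mem_centralizer_iff]
  rw [this]
  exact isClosed_biInter fun m _ => isClosed_eq (by fun_prop) (by fun_prop)

private lemma fatten_zero (I : Set ℤ) : fatten 0 I = I := by
  ext x
  constructor
  · rintro ⟨y, hy, h⟩
    rw [Nat.cast_zero, abs_nonpos_iff, sub_eq_zero] at h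
    exact h ▸ hy
  · intro hx
    exact ⟨x, hx, by simp⟩

/-- If `B ⊆ A` is a quasi-local subalgebra satisfying weak relative Haag
duality with constant `R`, then every `B`-`B` bimodular linear map `Ψ : A → A` has spread at
most `R`: `Ψ(A_I) ⊆ A_{I^{+R}}` for every finite interval `I`.  In particular, under strong
relative Haag duality (`R = 0`) every such `Ψ` has spread `0`. -/
theorem bimodular_hasSpread {A : Type*} [CStarAlgebra A]
    (Q : QuasiLocalStructure A) (B : StarSubalgebra ℂ A)
    (hB : IsQuasiLocalSubalgebra Q B) (R : ℕ)
    (hHaag : WeakRelativeHaagDuality Q B R)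
    (Ψ : A →ₗ[ℂ] A)
    (hbimod : ∀ b₁ ∈ B, ∀ b₂ ∈ B, ∀ a : A, Ψ (b₁ * a * b₂) = b₁ * Ψ a * b₂) :
    (∀ I : Set ℤ, IsFinInterval I → ∀ a ∈ Q.net I, Ψ a ∈ Q.net (fatten R I)) ∧
    (R = 0 → ∀ I : Set ℤ, IsFinInterval I → ∀ a ∈ Q.net I, Ψ a ∈ Q.net I) := by
  have main : ∀ I : Set ℤ, IsFinInterval I → ∀ a ∈ Q.net I, Ψ a ∈ Q.net (fatten R I) := by
    intro I hI a ha
    apply hHaag I hI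
    intro m hm
    -- It suffices that every element of `B_{Iᶜ}` commutes with `Ψ a`.
    set T : StarSubalgebra ℂ A := StarSubalgebra.centralizer ℂ {Ψ a} with hT
    have hTclosed : IsClosed (T : Set A) := by
      rw [hT, StarSubalgebra.coe_centralizer]
      exact isClosed_set_centralizer _
    have hgen : (⋃ J ∈ {J : Set ℤ | IsFinInterval J ∧ J ⊆ Iᶜ},
        ((B : Set A) ∩ (Q.net J : Set A))) ⊆ (T : Set A) := by
      have key : ∀ b ∈ (⋃ J ∈ {J : Set ℤ | IsFinInterval J ∧ J ⊆ Iᶜ},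
          ((B : Set A) ∩ (Q.net J : Set A))), Ψ a * b = b * Ψ a := by
        intro b hb
        simp only [Set.mem_iUnion, Set.mem_setOf_eq, Set.mem_inter_iff] at hb
        obtain ⟨J, ⟨hJ, hJI⟩, hbB, hbJ⟩ := hb
        have hIJ : I ∩ J = ∅ := by
          ext x
          simp only [Set.mem_inter_iff, Set.mem_empty_iff_false, iff_false, not_and]
          intro hxI hxJ
          exact hJI hxJ hxI
        have hcomm : a * b = b * a := Q.locality I J hI hJ hIJ a ha b hbJ
        have h1 : Ψ (b * a) = b * Ψ a := by
          have := hbimod b hbB 1 B.one_mem a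
          simpa using this
        have h2 : Ψ (a * b) = Ψ a * b := by
          have := hbimod 1 B.one_mem b hbB a
          simpa using this
        rw [← h2, hcomm, h1]
      intro b hb
      rw [SetLike.mem_coe, StarSubalgebra.mem_centralizer_iff]
      intro g hg
      rw [Set.mem_singleton_iff] at hg
      subst hg
      have hstar : star b ∈ ⋃ J ∈ {J : Set ℤ | IsFinInterval J ∧ J ⊆ Iᶜ},
          ((B : Set A) ∩ (Q.net J : Set A)) := by
        simp only [Set.mem_iUnion, Set.mem_setOf_eq, Set.mem_inter_iff] at hb ⊢
        obtain ⟨J, hJ, hbB, hbJ⟩ := hb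
        exact ⟨J, hJ, star_mem hbB, star_mem hbJ⟩
      refine ⟨key b hb, ?_⟩
      have := congrArg star (key (star b) hstar)
      simpa [mul_comm] using this.symm
    have hle : Q.relAlgebraOf (B : Set A) Iᶜ ≤ T :=
      StarSubalgebra.topologicalClosure_minimal (StarAlgebra.adjoin_le hgen) hTclosed
    have hmT : m ∈ T := hle hm
    rw [hT, StarSubalgebra.mem_centralizer_iff] at hmT
    exact (hmT (Ψ a) rfl).1.symm
  refine ⟨main, fun hR I hI a ha => ?_⟩
  have := main I hI a ha
  rwa [hR, fatten_zero] at this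

end
end

section
/- Let A be a unital C*-algebra with a quasi-local structure over ℤ, let B ⊆ A be a quasi-local subalgebra satisfying weak relative Haag duality with constant R ≥ 0, and let E : A → A be a conditional expectation onto B. Then E has bounded spread into B: E(A_I) ⊆ B ∩ A_{I^{+R}} = B_{I^{+R}} for every finite interval I. -/
open Set

noncomputable section

variable {A : Type*} [CStarAlgebra A]

/-- A conditional expectation onto `B`: a unital linear positive idempotent map `E : A → A`
with range contained in `B` satisfying the `B`-bimodule property. -/
structure IsConditionalExpectation {A : Type*} [CStarAlgebra A] [PartialOrder A]
    [StarOrderedRing A] (B : Set A) (E : A → A) : Prop where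
  map_add : ∀ x y : A, E (x + y) = E x + E y
  map_smul : ∀ (z : ℂ) (x : A), E (z • x) = z • E x
  map_one : E 1 = 1
  mem_of : ∀ a : A, E a ∈ B
  idem : ∀ a : A, E (E a) = E a
  pos : ∀ a : A, 0 ≤ a → 0 ≤ E a
  bimod : ∀ b₁ ∈ B, ∀ b₂ ∈ B, ∀ a : A, E (b₁ * a * b₂) = b₁ * E a * b₂

/-- `E` is local: there is `N` such that every finite interval `I` with `|I| ≥ N` carries a
finite projective basis `{b i} ⊆ A_I` with `a = Σᵢ bᵢ E(bᵢ* a)` for all `a ∈ A`. -/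
def IsLocalExpectation {A : Type*} [CStarAlgebra A] (Q : QuasiLocalStructure A)
    (E : A → A) : Prop :=
  ∃ N : ℕ, ∀ I : Set ℤ, IsFinInterval I → N ≤ I.ncard →
    ∃ (n : ℕ) (b : Fin n → A), (∀ i, b i ∈ Q.net I) ∧
      ∀ a : A, a = ∑ i, b i * E (star (b i) * a)


lemma isClosed_setCentralizer_s8 {A : Type*} [CStarAlgebra A] (S : Set A) :
    IsClosed (Set.centralizer S) := by
  have : Set.centralizer S = ⋂ g ∈ S, {x : A | g * x = x * g} := by
    ext x; simp [Set.mem_centralizer_iff]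
  rw [this]
  exact isClosed_biInter fun g _ => isClosed_eq (by fun_prop) (by fun_prop)

/-- If `B ⊆ A` is a quasi-local subalgebra satisfying weak relative Haag
duality with constant `R` and `E : A → A` is a conditional expectation onto `B`, then `E`
has bounded spread into `B`: `E(A_I) ⊆ B ∩ A_{I^{+R}} = B_{I^{+R}}` for every finite
interval `I`. -/
theorem conditionalExpectation_hasSpread {A : Type*} [CStarAlgebra A]
    [PartialOrder A] [StarOrderedRing A]
    (Q : QuasiLocalStructure A) (B : StarSubalgebra ℂ A)
    (hB : IsQuasiLocalSubalgebra Q B) (R : ℕ)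
    (hHaag : WeakRelativeHaagDuality Q B R)
    (E : A → A) (hE : IsConditionalExpectation (B : Set A) E) :
    ∀ I : Set ℤ, IsFinInterval I → ∀ a ∈ Q.net I,
      E a ∈ (B : Set A) ∩ (Q.net (fatten R I) : Set A) := by
  intro I hI a haI
  refine ⟨hE.mem_of a, ?_⟩
  apply hHaag I hI
  -- suffices: every element of relAlgebraOf B Iᶜ commutes with E a
  have key : (Q.relAlgebraOf (B : Set A) Iᶜ : Set A) ⊆
      (StarSubalgebra.centralizer ℂ {E a} : Set A) := by
    have hclosed : IsClosed ((StarSubalgebra.centralizer ℂ {E a} : Set A)) := by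
      rw [StarSubalgebra.coe_centralizer]
      exact isClosed_setCentralizer_s8 _
    refine StarSubalgebra.topologicalClosure_minimal ?_ hclosed
    refine StarAlgebra.adjoin_le ?_
    rintro x hx
    simp only [Set.mem_iUnion] at hx
    obtain ⟨J, ⟨hJfin, hJsub⟩, hxB, hxJ⟩ := hx
    have hIJ : J ∩ I = ∅ := by
      apply Set.eq_empty_of_forall_notMem
      intro y hy
      exact (hJsub hy.1) hy.2
    have hcomm : a * x = x * a := (Q.locality J I hJfin hI hIJ x hxJ a haI).symm
    have h1 : E (x * a) = x * E a := by
      have := hE.bimod x hxB 1 B.one_mem a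
      simpa using this
    have h2 : E (a * x) = E a * x := by
      have := hE.bimod 1 B.one_mem x hxB a
      simpa using this
    have hc : x * E a = E a * x := by rw [← h1, ← h2, hcomm]
    rw [SetLike.mem_coe, StarSubalgebra.mem_centralizer_iff]
    rintro g rfl
    constructor
    · exact hc.symm
    · have hsx : star x ∈ (B : Set A) ∩ (Q.net J : Set A) :=
        ⟨star_mem hxB, star_mem hxJ⟩
      have hcomm' : a * star x = star x * a :=
        (Q.locality J I hJfin hI hIJ (star x) hsx.2 a haI).symm
      have h1' : E (star x * a) = star x * E a := by
        have := hE.bimod (star x) hsx.1 1 B.one_mem a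
        simpa using this
      have h2' : E (a * star x) = E a * star x := by
        have := hE.bimod 1 B.one_mem (star x) hsx.1 a
        simpa using this
      have hc' : star x * E a = E a * star x := by rw [← h1', ← h2', hcomm']
      simpa [star_mul] using congrArg star hc'
  intro g hg
  have : g ∈ StarSubalgebra.centralizer ℂ {E a} := key hg
  rw [StarSubalgebra.mem_centralizer_iff] at this
  exact ((this (E a) rfl).1).symm

end
end

section
/- Let A be a unital C*-algebra with a quasi-local structure over ℤ satisfying strong Haag duality, i.e. Z_A(A_{I^c}) ⊆ A_I for every finite interval I. Let B ⊆ A be a quasi-local subalgebra satisfying weak relative Haag duality with some constant R ≥ 0, and let E : A → A be a local conditional expectation onto B that is on-site, i.e. E(A_I) ⊆ A_I for every finite interval I. Then B ⊆ A satisfies strong relative Haag duality: Z_A(B_{I^c}) ⊆ A_I for every finite interval I. -/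
open Set

noncomputable section

variable {A : Type*} [CStarAlgebra A]

lemma fatten_empty (R : ℕ) : fatten R (∅ : Set ℤ) = ∅ := by
  ext x; simp [fatten]

lemma fatten_Icc (R : ℕ) (p q : ℤ) (h : p ≤ q) :
    fatten R (Set.Icc p q) = Set.Icc (p - R) (q + R) := by
  ext x
  constructor
  · rintro ⟨y, hy, hxy⟩
    simp only [Set.mem_Icc] at hy ⊢
    rw [abs_le] at hxy
    omega
  · intro hx
    simp only [Set.mem_Icc] at hx
    refine ⟨max p (min x q), ?_, ?_⟩
    · simp only [Set.mem_Icc]; omega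
    · rw [abs_le]; omega

lemma ncard_Icc_int (a b : ℤ) : (Set.Icc a b).ncard = (b + 1 - a).toNat := by
  rw [← Finset.coe_Icc, Set.ncard_coe_finset, Int.card_Icc]

/-- Suppose `A` satisfies strong Haag duality, `B ⊆ A` is a quasi-local
subalgebra satisfying weak relative Haag duality with some constant `R`, and `E : A → A` is a
local conditional expectation onto `B` which is on-site (`E(A_I) ⊆ A_I` for all finite
intervals).  Then `B ⊆ A` satisfies strong relative Haag duality:
`Z_A(B_{Iᶜ}) ⊆ A_I` for every finite interval `I`. -/
theorem strongRelativeHaag_of_onsite {A : Type*} [CStarAlgebra A]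
    [PartialOrder A] [StarOrderedRing A]
    (Q : QuasiLocalStructure A)
    (hstrong : ∀ I : Set ℤ, IsFinInterval I →
      Set.centralizer ((Q.algebraOf Iᶜ : Set A)) ⊆ (Q.net I : Set A))
    (B : StarSubalgebra ℂ A) (hB : IsQuasiLocalSubalgebra Q B)
    (R : ℕ) (hHaag : WeakRelativeHaagDuality Q B R)
    (E : A → A) (hE : IsConditionalExpectation (B : Set A) E)
    (hlocal : IsLocalExpectation Q E)
    (honsite : ∀ I : Set ℤ, IsFinInterval I → ∀ a ∈ Q.net I, E a ∈ Q.net I) :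
    ∀ I : Set ℤ, IsFinInterval I →
      Set.centralizer ((Q.relAlgebraOf (B : Set A) Iᶜ : Set A)) ⊆ (Q.net I : Set A) := by
  intro I hI x hx
  have hxR : x ∈ Q.net (fatten R I) := hHaag I hI hx
  obtain ⟨p, q, rfl⟩ := hI
  by_cases hpq : q < p
  · have he : Set.Icc p q = (∅ : Set ℤ) := Set.Icc_eq_empty (by omega)
    rw [he, fatten_empty] at hxR
    rw [he]
    exact hxR
  push_neg at hpq
  obtain ⟨N, hloc⟩ := hlocal
  rw [fatten_Icc R p q hpq] at hxR
  set S₀ : Set A :=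
    ⋃ J ∈ {J : Set ℤ | IsFinInterval J ∧ J ⊆ (Set.Icc p q)ᶜ}, (Q.net J : Set A) with hS₀def
  have hgen : ∀ a ∈ S₀, a * x = x * a := by
    intro a ha
    rw [hS₀def] at ha
    simp only [Set.mem_iUnion, Set.mem_setOf_eq] at ha
    obtain ⟨J, ⟨⟨c, d, rfl⟩, hJsub⟩, haJ⟩ := ha
    by_cases hcd : d < c
    · have he : Set.Icc c d = (∅ : Set ℤ) := Set.Icc_eq_empty (by omega)
      rw [he] at haJ
      obtain ⟨z, rfl⟩ := Q.net_empty a haJ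
      exact Algebra.commutes z x
    push_neg at hcd
    have hside : d < p ∨ q < c := by
      by_contra h
      push_neg at h
      have hm : (max p c) ∈ Set.Icc c d := by simp only [Set.mem_Icc]; omega
      have hmem := hJsub hm
      simp only [Set.mem_compl_iff, Set.mem_Icc, not_and, not_le] at hmem
      omega
    have key : ∀ u v e f : ℤ, v + 1 - u = (N : ℤ) + 1 → Set.Icc u v ⊆ Set.Icc e f →
        Set.Icc c d ⊆ Set.Icc e f → Set.Icc e f ⊆ (Set.Icc p q)ᶜ →
        Set.Icc (p - R) (q + R) ∩ Set.Icc u v = ∅ → a * x = x * a := by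
      intro u v e f hcard hKL hJL hLsub hdisj
      obtain ⟨n, b, hb, hbasis⟩ := hloc (Set.Icc u v) ⟨u, v, rfl⟩
        (by rw [ncard_Icc_int]; omega)
      have hbL : ∀ i, b i ∈ Q.net (Set.Icc e f) := fun i =>
        Q.isotony _ _ ⟨u, v, rfl⟩ ⟨e, f, rfl⟩ hKL (hb i)
      have haL : a ∈ Q.net (Set.Icc e f) :=
        Q.isotony _ _ ⟨c, d, rfl⟩ ⟨e, f, rfl⟩ hJL haJ
      have hxb : ∀ i, x * b i = b i * x := fun i =>
        Q.locality _ _ ⟨p - R, q + R, rfl⟩ ⟨u, v, rfl⟩ hdisj x hxR (b i) (hb i)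
      have hcx : ∀ i, E (star (b i) * a) * x = x * E (star (b i) * a) := by
        intro i
        have hmem : star (b i) * a ∈ Q.net (Set.Icc e f) := mul_mem (star_mem (hbL i)) haL
        have hEc : E (star (b i) * a) ∈ Q.net (Set.Icc e f) := honsite _ ⟨e, f, rfl⟩ _ hmem
        have hEB : E (star (b i) * a) ∈ (B : Set A) := hE.mem_of _
        have hmem' : E (star (b i) * a) ∈ Q.relAlgebraOf (B : Set A) (Set.Icc p q)ᶜ :=
          StarSubalgebra.le_topologicalClosure _
            (StarAlgebra.subset_adjoin ℂ _
              (Set.mem_iUnion₂.mpr ⟨Set.Icc e f, ⟨⟨e, f, rfl⟩, hLsub⟩, hEB, hEc⟩))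
        exact hx _ hmem'
      conv_lhs => rw [hbasis a]
      conv_rhs => rw [hbasis a]
      rw [Finset.sum_mul, Finset.mul_sum]
      refine Finset.sum_congr rfl fun i _ => ?_
      rw [mul_assoc, hcx i, ← mul_assoc, ← hxb i, mul_assoc]
    rcases hside with hside | hside
    · refine key (p - 1 - R - N) (p - 1 - R) (min c (p - 1 - R - N)) (p - 1) (by omega)
        (Set.Icc_subset_Icc (by omega) (by omega))
        (Set.Icc_subset_Icc (by omega) (by omega)) ?_ ?_
      · intro z hz
        simp only [Set.mem_Icc] at hz
        simp only [Set.mem_compl_iff, Set.mem_Icc, not_and, not_le]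
        omega
      · rw [Set.eq_empty_iff_forall_notMem]
        intro z hz
        simp only [Set.mem_inter_iff, Set.mem_Icc] at hz
        omega
    · refine key (q + 1 + R) (q + 1 + R + N) (q + 1) (max d (q + 1 + R + N)) (by omega)
        (Set.Icc_subset_Icc (by omega) (by omega))
        (Set.Icc_subset_Icc (by omega) (by omega)) ?_ ?_
      · intro z hz
        simp only [Set.mem_Icc] at hz
        simp only [Set.mem_compl_iff, Set.mem_Icc, not_and, not_le]
        omega
      · rw [Set.eq_empty_iff_forall_notMem]
        intro z hz
        simp only [Set.mem_inter_iff, Set.mem_Icc] at hz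
        omega
  have hgenstar : ∀ a ∈ S₀, star a ∈ S₀ := by
    intro a ha
    rw [hS₀def] at ha ⊢
    simp only [Set.mem_iUnion, Set.mem_setOf_eq] at ha ⊢
    obtain ⟨J, hJ, haJ⟩ := ha
    exact ⟨J, hJ, star_mem haJ⟩
  have hpair : ∀ a ∈ StarAlgebra.adjoin ℂ S₀, a * x = x * a ∧ a * star x = star x * a := by
    intro a ha
    induction ha using StarAlgebra.adjoin_induction with
    | mem y hy =>
      refine ⟨hgen y hy, ?_⟩
      have h1 := hgen _ (hgenstar y hy)
      simpa only [star_mul, star_star] using (congrArg star h1).symm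
    | algebraMap r => exact ⟨Algebra.commutes r x, Algebra.commutes r (star x)⟩
    | add u v hu hv ihu ihv =>
      exact ⟨by rw [add_mul, mul_add, ihu.1, ihv.1],
             by rw [add_mul, mul_add, ihu.2, ihv.2]⟩
    | mul u v hu hv ihu ihv =>
      exact ⟨by rw [mul_assoc, ihv.1, ← mul_assoc, ihu.1, mul_assoc],
             by rw [mul_assoc, ihv.2, ← mul_assoc, ihu.2, mul_assoc]⟩
    | star u hu ihu =>
      constructor
      · simpa only [star_mul, star_star] using (congrArg star ihu.2).symm
      · simpa only [star_mul, star_star] using (congrArg star ihu.1).symm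
  have h1closed : IsClosed {a : A | a * x = x * a} :=
    isClosed_eq (continuous_id.mul continuous_const) (continuous_const.mul continuous_id)
  have h2closed : IsClosed {a : A | a * star x = star x * a} :=
    isClosed_eq (continuous_id.mul continuous_const) (continuous_const.mul continuous_id)
  have hcomm : ∀ a ∈ Q.algebraOf (Set.Icc p q)ᶜ, a * x = x * a := by
    intro a ha
    have ha' : a ∈ closure ((StarAlgebra.adjoin ℂ S₀ : StarSubalgebra ℂ A) : Set A) := ha
    have hsub : ((StarAlgebra.adjoin ℂ S₀ : StarSubalgebra ℂ A) : Set A) ⊆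
        {a : A | a * x = x * a} ∩ {a : A | a * star x = star x * a} := fun y hy =>
      ⟨(hpair y hy).1, (hpair y hy).2⟩
    exact (closure_minimal hsub (h1closed.inter h2closed) ha').1
  exact hstrong (Set.Icc p q) ⟨p, q, rfl⟩ fun m hm => hcomm m hm


end
end
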